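/- Advice lower bound for weighted binary string guessing (Theorem 16). Let n ≥ 1 and b be natural numbers, let 0 < s ≤ t be reals, and let 0 < α < s·t/(s+t). Let μ be a randomized algorithm reading b bits of advice for the n-round guessing game over the binary alphabet Fin 2 (a PMF over pairs (φ, g) as below), whose cost on input x : Fin n → Fin 2 for a pair (φ,g) is Σ_i c(x_i, y_i), where y_i is the answer of (φ,g) in round i and c(0,1) = s, c(1,0) = t, c(0,0) = c(1,1) = 0. If E_{(φ,g)∼μ}[cost on x] ≤ α·n for every input x, then b ≥ K_{s/(s+t)}(α/t)·n. -/

import Mathlib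

/-!
Draw the input bits independently with `P(0) = t/(s+t)`, `P(1) = s/(s+t)` and bound the
exponential moment `E[exp (-θ · cost)]`. Against one adaptive strategy, summing out the last
round shows that it is at most `r^n`, where `r` bounds every column sum `∑ᵥ P(v) e^{-θ c(v,u)}`;
for this prior `r = (t + s e^{-θt})/(s+t)` by convexity of `exp`. Reading `b` bits of advice
costs at most a factor `2^b` (sum over all advice values), and Jensen's inequality turns the
bound `α n` on the expected cost into `exp (-θ α n) ≤ 2^b r^n`. Taking logarithms with
`e^{-θt} = X(1-Y)/(Y(1-X))`, where `X = α/t` and `Y = s/(s+t)`, gives exactly `b ≥ K_Y(X) n`.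
-/

open Classical

/-- The binary-divergence-type function `K_y(x) = x log₂(x/y) + (1-x) log₂((1-x)/(1-y))`. -/
noncomputable def Kfun (y x : ℝ) : ℝ :=
  x * Real.logb 2 (x / y) + (1 - x) * Real.logb 2 ((1 - x) / (1 - y))

/-- A deterministic algorithm reading `b` bits of advice for an `n`-round guessing game
with known history over the alphabet `Fin q`. -/
abbrev AdviceAlg (n q b : ℕ) : Type :=
  ((Fin n → Fin q) → Fin (2 ^ b)) ×
    (Fin (2 ^ b) → (i : Fin n) → ({j : Fin n // j < i} → Fin q) → Fin q)

open Finset Real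

lemma exp_sum_mul_le_sum_mul_exp {ι : Type*} [Fintype ι] {w : ι → ℝ} (hw0 : ∀ i, 0 ≤ w i)
    (hw1 : ∑ i, w i = 1) (z : ι → ℝ) : exp (∑ i, w i * z i) ≤ ∑ i, w i * exp (z i) := by
  simpa only [smul_eq_mul] using
    convexOn_exp.map_sum_le (fun i _ => hw0 i) hw1 fun i _ => Set.mem_univ (z i)

section Strategy

variable {β : Type*}

def restrictStrategy {m : ℕ} (f : (i : Fin (m + 1)) → ({j // j < i} → β) → β) :
    (i : Fin m) → ({j : Fin m // j < i} → β) → β :=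
  fun i h => f i.castSucc fun j => h ⟨j.1.castLT (j.2.trans i.castSucc_lt_last), j.2⟩

lemma snoc_history_eq {m : ℕ} (x : Fin m → β) (v : β) {k : Fin (m + 1)} (hk : k ≤ Fin.last m) :
    (fun j : {j // j < k} => Fin.snoc (α := fun _ => β) x v j.1) =
      fun j => x (j.1.castLT (j.2.trans_le hk)) :=
  funext fun j => dif_pos (j.2.trans_le hk)

theorem sum_prod_strategy_le [Fintype β] [Nonempty β] {w : β → β → ℝ} (hw : ∀ v u, 0 ≤ w v u)
    {r : ℝ} (hr : ∀ u, ∑ v, w v u ≤ r) :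
    ∀ {n : ℕ} (f : (i : Fin n) → ({j : Fin n // j < i} → β) → β),
      ∑ x : Fin n → β, ∏ i, w (x i) (f i fun j => x j.1) ≤ r ^ n
  | 0, f => by simp
  | m + 1, f => by
    have hr0 : 0 ≤ r := (sum_nonneg fun v _ => hw v _).trans (hr (Classical.arbitrary β))
    calc ∑ x : Fin (m + 1) → β, ∏ i, w (x i) (f i fun j => x j.1)
        = ∑ x : Fin m → β, (∏ i, w (x i) (restrictStrategy f i fun j => x j.1)) *
            ∑ v, w v (f (Fin.last m) fun j => x (j.1.castLT j.2)) := by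
          rw [← (Fin.snocEquiv _).sum_comp, Fintype.sum_prod_type_right]
          refine sum_congr rfl fun x _ => ?_
          rw [mul_sum]
          refine sum_congr rfl fun v _ => ?_
          simp only [Fin.snocEquiv_apply, Fin.prod_univ_castSucc, Fin.snoc_castSucc, Fin.snoc_last,
            restrictStrategy, snoc_history_eq x v (Fin.castSucc_lt_last _).le,
            snoc_history_eq x v le_rfl]
      _ ≤ ∑ x : Fin m → β, (∏ i, w (x i) (restrictStrategy f i fun j => x j.1)) * r :=
          sum_le_sum fun x _ => mul_le_mul_of_nonneg_left (hr _) (prod_nonneg fun _ _ => hw _ _)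
      _ = (∑ x : Fin m → β, ∏ i, w (x i) (restrictStrategy f i fun j => x j.1)) * r :=
          (sum_mul ..).symm
      _ ≤ r ^ m * r := mul_le_mul_of_nonneg_right (sum_prod_strategy_le hw hr _) hr0
      _ = r ^ (m + 1) := (pow_succ r m).symm

end Strategy

namespace AdviceAlg

variable {n k b : ℕ}

def cost (c : Fin k → Fin k → ℝ) (A : AdviceAlg n k b) (x : Fin n → Fin k) : ℝ :=
  ∑ i, c (x i) (A.2 (A.1 x) i fun j => x j.1)

variable [NeZero k] {c : Fin k → Fin k → ℝ} {q : Fin k → ℝ} {θ r : ℝ}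

theorem sum_prod_mul_exp_cost_le (hq : ∀ v, 0 ≤ q v)
    (hr : ∀ u, ∑ v, q v * exp (-θ * c v u) ≤ r) (A : AdviceAlg n k b) :
    ∑ x, (∏ i, q (x i)) * exp (-θ * A.cost c x) ≤ 2 ^ b * r ^ n := by
  have hw : ∀ v u, 0 ≤ q v * exp (-θ * c v u) := fun v u => mul_nonneg (hq v) (exp_pos _).le
  calc ∑ x, (∏ i, q (x i)) * exp (-θ * A.cost c x)
      = ∑ x, ∏ i, q (x i) * exp (-θ * c (x i) (A.2 (A.1 x) i fun j => x j.1)) := by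
        simp only [cost, mul_sum, exp_sum, prod_mul_distrib]
    _ ≤ ∑ x, ∑ a, ∏ i, q (x i) * exp (-θ * c (x i) (A.2 a i fun j => x j.1)) :=
        sum_le_sum fun x _ => single_le_sum
          (f := fun a => ∏ i, q (x i) * exp (-θ * c (x i) (A.2 a i fun j => x j.1)))
          (fun a _ => prod_nonneg fun i _ => hw _ _) (mem_univ _)
    _ = ∑ a : Fin (2 ^ b), ∑ x : Fin n → Fin k,
          ∏ i, q (x i) * exp (-θ * c (x i) (A.2 a i fun j => x j.1)) := sum_comm
    _ ≤ ∑ _a : Fin (2 ^ b), r ^ n := sum_le_sum fun a _ => sum_prod_strategy_le hw hr (A.2 a)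
    _ = 2 ^ b * r ^ n := by
        rw [sum_const, card_univ, Fintype.card_fin, nsmul_eq_mul, Nat.cast_pow, Nat.cast_ofNat]

theorem exp_neg_mul_le_of_expectedCost_le (hq0 : ∀ v, 0 ≤ q v) (hq1 : ∑ v, q v = 1)
    (hθ : 0 ≤ θ) (hr : ∀ u, ∑ v, q v * exp (-θ * c v u) ≤ r)
    (μ : AdviceAlg n k b → ℝ) (hμ0 : ∀ A, 0 ≤ μ A) (hμ1 : ∑ A, μ A = 1) {C : ℝ}
    (hC : ∀ x, ∑ A, μ A * A.cost c x ≤ C) :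
    exp (-θ * C) ≤ 2 ^ b * r ^ n := by
  have hP0 : ∀ x : Fin n → Fin k, 0 ≤ ∏ i, q (x i) := fun x => prod_nonneg fun i _ => hq0 _
  have hP1 : ∑ x : Fin n → Fin k, ∏ i, q (x i) = 1 := by rw [← Fintype.sum_pow, hq1, one_pow]
  have hmean : -θ * C ≤ ∑ x, (∏ i, q (x i)) * (-θ * ∑ A, μ A * A.cost c x) :=
    calc -θ * C = ∑ x, (∏ i, q (x i)) * (-θ * C) := by rw [← sum_mul, hP1, one_mul]
      _ ≤ _ := sum_le_sum fun x _ => mul_le_mul_of_nonneg_left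
          (mul_le_mul_of_nonpos_left (hC x) (neg_nonpos.2 hθ)) (hP0 x)
  calc exp (-θ * C)
      ≤ exp (∑ x, (∏ i, q (x i)) * (-θ * ∑ A, μ A * A.cost c x)) := exp_le_exp.2 hmean
    _ ≤ ∑ x, (∏ i, q (x i)) * exp (-θ * ∑ A, μ A * A.cost c x) :=
        exp_sum_mul_le_sum_mul_exp hP0 hP1 _
    _ ≤ ∑ x, (∏ i, q (x i)) * ∑ A, μ A * exp (-θ * A.cost c x) := by
        refine sum_le_sum fun x _ => mul_le_mul_of_nonneg_left ?_ (hP0 x)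
        have hlin : -θ * ∑ A, μ A * A.cost c x = ∑ A, μ A * (-θ * A.cost c x) := by
          rw [mul_sum]
          exact sum_congr rfl fun _ _ => mul_left_comm ..
        rw [hlin]
        exact exp_sum_mul_le_sum_mul_exp hμ0 hμ1 _
    _ = ∑ A, μ A * ∑ x, (∏ i, q (x i)) * exp (-θ * A.cost c x) := by
        simp only [mul_sum]
        rw [sum_comm]
        exact sum_congr rfl fun _ _ => sum_congr rfl fun _ _ => mul_left_comm ..
    _ ≤ ∑ A, μ A * (2 ^ b * r ^ n) :=
        sum_le_sum fun A _ =>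
          mul_le_mul_of_nonneg_left (sum_prod_mul_exp_cost_le hq0 hr A) (hμ0 A)
    _ = 2 ^ b * r ^ n := by rw [← sum_mul, hμ1, one_mul]

end AdviceAlg

def binaryCost (s t : ℝ) : Fin 2 → Fin 2 → ℝ :=
  fun v u => if v = u then 0 else if v = 0 then s else t

noncomputable def binaryPrior (s t : ℝ) : Fin 2 → ℝ := ![t / (s + t), s / (s + t)]

lemma binaryPrior_nonneg {s t : ℝ} (hs : 0 ≤ s) (ht : 0 < t) (v : Fin 2) :
    0 ≤ binaryPrior s t v := by
  fin_cases v <;> simp only [binaryPrior, Fin.zero_eta, Fin.mk_one, Matrix.cons_val_zero,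
    Matrix.cons_val_one, Matrix.cons_val_fin_one] <;> positivity

lemma sum_binaryPrior {s t : ℝ} (hs : 0 ≤ s) (ht : 0 < t) : ∑ v, binaryPrior s t v = 1 := by
  simp [binaryPrior, Fin.sum_univ_two, ← add_div, add_comm t, (by positivity : s + t ≠ 0)]

lemma mul_exp_neg_mul_add_le {s t : ℝ} (hs : 0 ≤ s) (hst : s ≤ t) (θ : ℝ) :
    t * exp (-θ * s) + s ≤ t + s * exp (-θ * t) := by
  rcases hst.eq_or_lt with rfl | hst
  · rw [add_comm]
  have ht : 0 < t := hs.trans_lt hst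
  have hchord := convexOn_exp.2 (Set.mem_univ (-θ * t)) (Set.mem_univ 0)
    (div_nonneg hs ht.le) (sub_nonneg.2 ((div_le_one ht).2 hst.le)) (add_sub_cancel _ _)
  simp only [smul_eq_mul, mul_zero, add_zero, exp_zero, mul_one] at hchord
  rw [show s / t * (-θ * t) = -θ * s by field_simp] at hchord
  calc t * exp (-θ * s) + s ≤ t * (s / t * exp (-θ * t) + (1 - s / t)) + s := by gcongr
    _ = t + s * exp (-θ * t) := by field_simp; ring

lemma binaryCost_column_le {s t : ℝ} (hs : 0 ≤ s) (hst : s ≤ t) (ht : 0 < t) (θ : ℝ)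
    (u : Fin 2) :
    ∑ v, binaryPrior s t v * exp (-θ * binaryCost s t v u) ≤ (t + s * exp (-θ * t)) / (s + t) := by
  simp only [binaryPrior, Fin.sum_univ_two, Matrix.cons_val_zero, Matrix.cons_val_one,
    Matrix.cons_val_fin_one, div_mul_eq_mul_div, ← add_div]
  rw [div_le_div_iff_of_pos_right (by positivity)]
  fin_cases u
  · simp [binaryCost]
  · simpa [binaryCost] using mul_exp_neg_mul_add_le hs hst θ

lemma Kfun_mul_log_two {X Y : ℝ} (hX0 : 0 < X) (hX1 : X < 1) (hY0 : 0 < Y) (hY1 : Y < 1) :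
    Kfun Y X * log 2 = X * log (X * (1 - Y) / (Y * (1 - X))) - log ((1 - Y) / (1 - X)) := by
  have h1X : 0 < 1 - X := by linarith
  have h1Y : 0 < 1 - Y := by linarith
  have hl2 : log 2 ≠ 0 := (log_pos one_lt_two).ne'
  simp only [Kfun, logb, log_div, log_mul, hX0.ne', hY0.ne', h1X.ne', h1Y.ne', ne_eq,
    mul_eq_zero, or_self, not_false_eq_true]
  field_simp
  ring

lemma exists_Kfun_mul_log_two_eq {s t α : ℝ} (hs : 0 < s) (ht : 0 < t) (hα0 : 0 < α)
    (hα1 : α < s * t / (s + t)) :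
    ∃ θ, 0 ≤ θ ∧
      Kfun (s / (s + t)) (α / t) * log 2 = -θ * α - log ((t + s * exp (-θ * t)) / (s + t)) := by
  have hst0 : 0 < s + t := by positivity
  set X := α / t
  set Y := s / (s + t)
  have hX0 : 0 < X := by positivity
  have hXY : X < Y := by
    rw [div_lt_div_iff₀ ht hst0]
    rwa [lt_div_iff₀ hst0] at hα1
  have hY1 : Y < 1 := (div_lt_one hst0).2 (by linarith)
  have hX1 : 1 - X ≠ 0 := by linarith
  have hY0 : Y ≠ 0 := by positivity
  set c := X * (1 - Y) / (Y * (1 - X))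
  have hc0 : 0 < c := div_pos (mul_pos hX0 (by linarith)) (mul_pos (hX0.trans hXY) (by linarith))
  have hc1 : c < 1 := (div_lt_one (by nlinarith)).2 (by nlinarith)
  -- the tilt `θ` with `exp (-θ t) = c` is the optimal one
  refine ⟨-log c / t, div_nonneg (neg_nonneg.2 (log_nonpos hc0.le hc1.le)) ht.le, ?_⟩
  have hexp : exp (-(-log c / t) * t) = c := by
    rw [show -(-log c / t) * t = log c by field_simp, exp_log hc0]
  have hr : (t + s * c) / (s + t) = (1 - Y) / (1 - X) :=
    calc (t + s * c) / (s + t) = (1 - Y) + Y * c := by simp only [Y]; field_simp; ring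
      _ = (1 - Y) / (1 - X) := by simp only [c]; field_simp; ring
  rw [hexp, hr, Kfun_mul_log_two hX0 (hXY.trans hY1) (hX0.trans hXY) hY1]
  simp only [X]
  ring

theorem weighted_bsg_lower_bound_general
    {n b : ℕ}
    (s t : ℝ) (hs : 0 < s) (hst : s ≤ t)
    (α : ℝ) (hα0 : 0 < α) (hα1 : α < s * t / (s + t))
    (μ : AdviceAlg n 2 b → ℝ) (hμ0 : ∀ a, 0 ≤ μ a) (hμ1 : ∑ a, μ a = 1)
    (hperf : ∀ x : Fin n → Fin 2,
      (∑ alg, μ alg * ∑ i,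
          (if x i = alg.2 (alg.1 x) i (fun j => x j.1) then (0 : ℝ)
            else if x i = 0 then s else t))
        ≤ α * n) :
    (b : ℝ) ≥ Kfun (s / (s + t)) (α / t) * n := by
  have ht : 0 < t := hs.trans_le hst
  obtain ⟨θ, hθ, hK⟩ := exists_Kfun_mul_log_two_eq hs ht hα0 hα1
  have hexp := AdviceAlg.exp_neg_mul_le_of_expectedCost_le (binaryPrior_nonneg hs.le ht)
    (sum_binaryPrior hs.le ht) hθ (binaryCost_column_le hs.le hst ht θ) μ hμ0 hμ1 hperf
  have hlog := log_le_log (exp_pos _) hexp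
  rw [log_exp, log_mul (by positivity) (by positivity), log_pow, log_pow] at hlog
  rw [ge_iff_le, ← mul_le_mul_iff_of_pos_right (log_pos one_lt_two), mul_right_comm, hK]
  linarith

/-- Advice lower bound for weighted binary string guessing (Theorem 16):
with per-round cost `c(0,1)=s`, `c(1,0)=t`, `c(0,0)=c(1,1)=0`, a randomized algorithm
reading `b` bits of advice with expected cost at most `α·n` on every input satisfies
`b ≥ K_{s/(s+t)}(α/t)·n`. -/
theorem weighted_bsg_lower_bound
    {n b : ℕ} (hn : 1 ≤ n)
    (s t : ℝ) (hs : 0 < s) (hst : s ≤ t)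
    (α : ℝ) (hα0 : 0 < α) (hα1 : α < s * t / (s + t))
    (μ : AdviceAlg n 2 b → ℝ) (hμ0 : ∀ a, 0 ≤ μ a) (hμ1 : ∑ a, μ a = 1)
    (hperf : ∀ x : Fin n → Fin 2,
      (∑ alg, μ alg * ∑ i,
          (if x i = alg.2 (alg.1 x) i (fun j => x j.1) then (0 : ℝ)
            else if x i = 0 then s else t))
        ≤ α * n) :
    (b : ℝ) ≥ Kfun (s / (s + t)) (α / t) * n :=
  weighted_bsg_lower_bound_general s t hs hst α hα0 hα1 μ hμ0 hμ1 hperf
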